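/- Suppose σ_1, …, σ_r satisfy property I with witnesses α_1, …, α_r. Then for every nonempty subset I ⊆ {1,…,r} one has |α_I| = |σ_I| − c(I), where α_I = ⋃_{i∈I} α_i, σ_I = ⋃_{i∈I} σ_i, and c(I) is the number of connected components of the intersection graph G_I. -/

import Mathlib

open Finset LaurentPolynomial

noncomputable section

/-- The union `σ_I = ⋃_{i ∈ I} σ_i`. -/
def unionOver {ι V : Type*} [DecidableEq V] (σ : ι → Finset V) (I : Finset ι) : Finset V :=
  I.sup σ

/-- The intersection graph `G_I` on the vertex set `I`. -/
def interGraph {ι V : Type*} [DecidableEq V] (σ : ι → Finset V) (I : Finset ι) :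
    SimpleGraph {i // i ∈ I} where
  Adj i j := i ≠ j ∧ (σ i.1 ∩ σ j.1).Nonempty
  symm := by
    constructor
    intro i j h
    exact ⟨h.1.symm, by rw [Finset.inter_comm]; exact h.2⟩
  loopless := by constructor; intro i h; exact h.1 rfl

/-- `c(I)`, the number of connected components of `G_I`. -/
def compCount {ι V : Type*} [DecidableEq V] (σ : ι → Finset V) (I : Finset ι) : ℕ :=
  Nat.card (interGraph σ I).ConnectedComponent

/-- Property I. -/
def PropertyI {ι V W : Type*} [DecidableEq V] [DecidableEq W]
    (σ : ι → Finset V) (α : ι → Finset W) : Prop :=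
  (∀ i, (α i).card + 1 = (σ i).card) ∧
  ∀ I : Finset ι, I.Nonempty → ∀ p ∉ I,
    (unionOver σ I ∩ σ p = ∅ → unionOver α I ∩ α p = ∅) ∧
    ((unionOver σ I ∩ σ p).Nonempty →
      (unionOver α I ∩ α p).card + 1 = (unionOver σ I ∩ σ p).card)

/-- The simplicial chromatic polynomial. -/
def simpChrom {ι : Type*} [Fintype ι] [DecidableEq ι] {n : ℕ} (σ : ι → Finset (Fin n)) :
    LaurentPolynomial ℤ :=
  T (n : ℤ) +
  ∑ I ∈ (univ : Finset ι).powerset.filter (fun I => I.Nonempty),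
    (-1) ^ I.card *
      T ((n : ℤ) - ((unionOver σ I).card : ℤ) + (compCount σ I : ℤ))

/-- Faces of the complex whose minimal nonfaces are the `α i`. -/
def facesOf {ι : Type*} [Fintype ι] {N : ℕ} (α : ι → Finset (Fin N)) :
    Finset (Finset (Fin N)) :=
  (univ : Finset (Finset (Fin N))).filter (fun F => ∀ i, ¬ α i ⊆ F)

/-- Coefficient of `t^k` in a Laurent polynomial. -/
def lcoeff (p : LaurentPolynomial ℤ) (k : ℤ) : ℤ := AddMonoidAlgebra.coeff p k

end

/-!
Induct on `I` by deleting a non-cut vertex `p` of `G_I`; one exists in every finite graph, e.g. a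
leaf of a spanning tree of one of its components. If `p` has a neighbour in `G_I`, then
`c(I) = c(I ∖ p)`, and property I gives `|α_{I∖p} ∩ α_p| = |σ_{I∖p} ∩ σ_p| - 1`, which together
with `|α_p| = |σ_p| - 1` and inclusion–exclusion makes both sides grow by the same amount. If `p`
is isolated, then `c(I) = c(I ∖ p) + 1`, while `σ_p` is disjoint from `σ_{I∖p}` and hence, by
property I, `α_p` from `α_{I∖p}`.
-/

namespace SimpleGraph

variable {V : Type*} (G : SimpleGraph V)

def IsNonCutVertex (v : V) : Prop :=
  ∀ a b : ({v}ᶜ : Set V), G.Reachable a b → (G.induce {v}ᶜ).Reachable a b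

variable {G}

theorem exists_isNonCutVertex [Finite V] [Nonempty V] : ∃ v, G.IsNonCutVertex v := by
  classical
  obtain ⟨u⟩ := ‹Nonempty V›
  set C := G.connectedComponentMk u
  obtain ⟨w, hw⟩ :=
    C.connected_toSimpleGraph.exists_preconnected_induce_compl_singleton_of_finite
  refine ⟨w, fun a b hab => ?_⟩
  by_cases ha : a.1 ∈ C.supp
  · have hb : b.1 ∈ C.supp := (ConnectedComponent.sound hab.symm).trans ha
    have hmaps : Set.MapsTo C.toSimpleGraph_hom {w}ᶜ {w.1}ᶜ := fun x hx hxw =>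
      hx (Subtype.ext hxw)
    have := hw ⟨⟨a, ha⟩, fun h => a.2 (congrArg Subtype.val h)⟩
      ⟨⟨b, hb⟩, fun h => b.2 (congrArg Subtype.val h)⟩
    exact this.map (induceHom C.toSimpleGraph_hom hmaps)
  · obtain ⟨p⟩ := hab
    refine ⟨p.induce {w.1}ᶜ fun x hx hxw => ha ?_⟩
    rw [Set.mem_singleton_iff] at hxw
    subst hxw
    exact (ConnectedComponent.sound ⟨p.takeUntil _ hx⟩).trans w.2

theorem IsNonCutVertex.map_induce_injective {v : V} (hv : G.IsNonCutVertex v) :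
    Function.Injective (ConnectedComponent.map (Embedding.induce (G := G) {v}ᶜ).toHom) := by
  refine ConnectedComponent.ind₂ fun a b hab => ?_
  simp only [ConnectedComponent.map_mk] at hab
  exact ConnectedComponent.sound (hv a b (ConnectedComponent.exact hab))

theorem IsNonCutVertex.card_connectedComponent_induce_of_adj {v w : V}
    (hv : G.IsNonCutVertex v) (hvw : G.Adj v w) :
    Nat.card (G.induce {v}ᶜ).ConnectedComponent = Nat.card G.ConnectedComponent := by
  refine Nat.card_eq_of_bijective _ ⟨hv.map_induce_injective, ?_⟩
  refine ConnectedComponent.ind fun x => ?_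
  by_cases hx : x = v
  · subst hx
    refine ⟨(G.induce {x}ᶜ).connectedComponentMk ⟨w, hvw.ne.symm⟩, ?_⟩
    exact (ConnectedComponent.connectedComponentMk_eq_of_adj hvw).symm
  · exact ⟨(G.induce {v}ᶜ).connectedComponentMk ⟨x, hx⟩, rfl⟩

theorem IsNonCutVertex.card_connectedComponent_induce_add_one [Finite V] {v : V}
    (hv : G.IsNonCutVertex v) (hv_isolated : ∀ w, ¬ G.Adj v w) :
    Nat.card (G.induce {v}ᶜ).ConnectedComponent + 1 = Nat.card G.ConnectedComponent := by
  have hrange : Set.range (ConnectedComponent.map (Embedding.induce (G := G) {v}ᶜ).toHom) =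
      {G.connectedComponentMk v}ᶜ := by
    ext c
    constructor
    · rintro ⟨c, rfl⟩ hc
      induction c using ConnectedComponent.ind with | h y => ?_
      obtain ⟨p⟩ := ConnectedComponent.exact hc.symm
      exact hv_isolated _ (p.adj_snd (Walk.not_nil_of_ne (Ne.symm y.2)))
    · induction c using ConnectedComponent.ind with | h x => ?_
      intro hx
      exact ⟨(G.induce {v}ᶜ).connectedComponentMk ⟨x, fun h => hx (congrArg _ h)⟩, rfl⟩
  rw [← Nat.card_range_of_injective hv.map_induce_injective, hrange, Nat.card_coe_set_eq,
    ← Set.ncard_singleton (G.connectedComponentMk v), Set.ncard_compl_add_ncard]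

end SimpleGraph

section IntersectionGraph

variable {ι V : Type*} [DecidableEq V]

theorem unionOver_empty (σ : ι → Finset V) : unionOver σ ∅ = ∅ := Finset.sup_empty

variable [DecidableEq ι] {I : Finset ι} {p : ι}

theorem card_unionOver_add_card_inter (σ : ι → Finset V) (hp : p ∈ I) :
    (unionOver σ I).card + (unionOver σ (I.erase p) ∩ σ p).card =
      (unionOver σ (I.erase p)).card + (σ p).card := by
  rw [unionOver, ← insert_erase hp, sup_insert, ← unionOver, erase_insert_eq_erase,
    erase_idem, sup_eq_union, union_comm, card_union_add_card_inter]

def interGraphEraseIso (σ : ι → Finset V) (hp : p ∈ I) :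
    interGraph σ (I.erase p) ≃g (interGraph σ I).induce {⟨p, hp⟩}ᶜ where
  toFun i := ⟨⟨i, mem_of_mem_erase i.2⟩, fun h => ne_of_mem_erase i.2 (congrArg Subtype.val h)⟩
  invFun i := ⟨i.1, mem_erase.2 ⟨fun h => i.2 (Subtype.ext h), i.1.2⟩⟩
  left_inv _ := rfl
  right_inv _ := rfl
  map_rel_iff' := and_congr_left' (not_congr (Subtype.mk_eq_mk.trans Subtype.ext_iff.symm))

theorem compCount_erase (σ : ι → Finset V) (hp : p ∈ I) :
    compCount σ (I.erase p) =
      Nat.card ((interGraph σ I).induce {⟨p, hp⟩}ᶜ).ConnectedComponent :=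
  Nat.card_congr (interGraphEraseIso σ hp).connectedComponentEquiv

theorem exists_interGraph_adj_iff (σ : ι → Finset V) (hp : p ∈ I) :
    (∃ j, (interGraph σ I).Adj ⟨p, hp⟩ j) ↔ (unionOver σ (I.erase p) ∩ σ p).Nonempty := by
  simp only [interGraph, unionOver, Finset.Nonempty, mem_inter, mem_sup, mem_erase]
  constructor
  · rintro ⟨⟨j, hj⟩, hjp, x, hxp, hxj⟩
    exact ⟨x, ⟨j, ⟨fun h => hjp (Subtype.ext h.symm), hj⟩, hxj⟩, hxp⟩
  · rintro ⟨x, ⟨j, ⟨hjp, hj⟩, hxj⟩, hxp⟩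
    exact ⟨⟨j, hj⟩, fun h => hjp (congrArg Subtype.val h).symm, x, hxp, hxj⟩

end IntersectionGraph

namespace PropertyI

variable {ι V W : Type*} [DecidableEq V] [DecidableEq W]
  {σ : ι → Finset V} {α : ι → Finset W} {I : Finset ι} {p : ι}

theorem inter_eq_empty (h : PropertyI σ α) (hp : p ∉ I)
    (hσ : unionOver σ I ∩ σ p = ∅) : unionOver α I ∩ α p = ∅ := by
  rcases I.eq_empty_or_nonempty with rfl | hI
  · rw [unionOver_empty, empty_inter]
  · exact (h.2 I hI p hp).1 hσ

theorem card_inter_add_one (h : PropertyI σ α) (hp : p ∉ I)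
    (hσ : (unionOver σ I ∩ σ p).Nonempty) :
    (unionOver α I ∩ α p).card + 1 = (unionOver σ I ∩ σ p).card := by
  rcases I.eq_empty_or_nonempty with rfl | hI
  · simp [unionOver_empty] at hσ
  · exact (h.2 I hI p hp).2 hσ

theorem card_unionOver_add_compCount (h : PropertyI σ α) (I : Finset ι) :
    (unionOver α I).card + compCount σ I = (unionOver σ I).card := by
  classical
  induction I using Finset.strongInduction with | H I ih => ?_
  rcases I.eq_empty_or_nonempty with rfl | hI
  · simp [unionOver_empty, compCount]
  have : Nonempty I := hI.to_subtype
  obtain ⟨⟨p, hp⟩, hcut⟩ := (interGraph σ I).exists_isNonCutVertex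
  have ih_erase := ih _ (erase_ssubset hp)
  rw [compCount_erase σ hp] at ih_erase
  have hα := card_unionOver_add_card_inter α hp
  have hσ := card_unionOver_add_card_inter σ hp
  have hαp := h.1 p
  rw [compCount]
  by_cases hadj : ∃ j, (interGraph σ I).Adj ⟨p, hp⟩ j
  · obtain ⟨j, hj⟩ := hadj
    have hcomp := hcut.card_connectedComponent_induce_of_adj hj
    have hinter := h.card_inter_add_one (notMem_erase p I)
      ((exists_interGraph_adj_iff σ hp).1 ⟨j, hj⟩)
    omega
  · have hcomp := hcut.card_connectedComponent_induce_add_one (not_exists.1 hadj)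
    have hσ_empty : unionOver σ (I.erase p) ∩ σ p = ∅ :=
      not_nonempty_iff_eq_empty.1 ((exists_interGraph_adj_iff σ hp).not.1 hadj)
    have hα_empty := h.inter_eq_empty (notMem_erase p I) hσ_empty
    rw [hσ_empty, card_empty] at hσ
    rw [hα_empty, card_empty] at hα
    omega

end PropertyI

/-- under property I, `|α_I| = |σ_I| − c(I)` for every nonempty `I`. -/
theorem stmt_0 {n r : ℕ} {W : Type*} [DecidableEq W]
    (σ : Fin r → Finset (Fin n)) (α : Fin r → Finset W)
    (h : PropertyI σ α) :
    ∀ I : Finset (Fin r), I.Nonempty →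
      (unionOver α I).card + compCount σ I = (unionOver σ I).card :=
  fun I _ => h.card_unionOver_add_compCount I
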